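/- arXiv:2308.09301 — 3 statements merged into one kernel-verified Lean document; each statement's English description precedes it below -/
import Mathlib

section
/- Let (S, E, T) be a closed and consistent observation table over input alphabet Σ and output alphabet O, and let (Q̂, q̂0, δ̂, L̂) be its hypothesis Moore machine. Then for every sequence s ∈ S ∪ {s·σ : s ∈ S, σ ∈ Σ}, the extended transition function satisfies δ̂*(q̂0, s) = row(s). -/
/-- A Moore machine over input alphabet `σ` and output alphabet `O`, with state type `Q`:
initial state `q0`, transition function `δ`, and output labeling `L`. -/
structure MooreMachine (σ O Q : Type*) where
  q0 : Q
  δ : Q → σ → Q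
  L : Q → O

/-- `M.run q w` is the extended transition function `δ*(q, w)`, the left fold of `δ` over `w`. -/
def MooreMachine.run {σ O Q : Type*} (M : MooreMachine σ O Q) (q : Q) (w : List σ) : Q :=
  w.foldl M.δ q

/-- An observation table `(S, E, T)`: finite sets of prefixes `S` (prefix-closed, containing ε)
and suffixes `E` (suffix-closed, containing ε), and an entry function `T`. -/
structure ObsTable (σ O : Type*) where
  S : Finset (List σ)
  E : Finset (List σ)
  T : List σ → O
  nil_mem_S : [] ∈ S
  prefixClosed : ∀ s ∈ S, ∀ t : List σ, t <+: s → t ∈ S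
  nil_mem_E : [] ∈ E
  suffixClosed : ∀ e ∈ E, ∀ t : List σ, t <:+ e → t ∈ E

/-- `row(s) : E → O`, given by `row(s)(e) = T(s·e)`. -/
def ObsTable.row {σ O : Type*} (Ot : ObsTable σ O) (s : List σ) : {e // e ∈ Ot.E} → O :=
  fun e => Ot.T (s ++ e.1)

/-- The table is closed if every `row(s·σ)` with `s ∈ S` coincides with `row(s')` for some `s' ∈ S`. -/
def ObsTable.Closed {σ O : Type*} (Ot : ObsTable σ O) : Prop :=
  ∀ s ∈ Ot.S, ∀ a : σ, ∃ s' ∈ Ot.S, Ot.row (s ++ [a]) = Ot.row s'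

/-- The table is consistent if equal rows of elements of `S` have equal one-step extensions. -/
def ObsTable.Consistent {σ O : Type*} (Ot : ObsTable σ O) : Prop :=
  ∀ s₁ ∈ Ot.S, ∀ s₂ ∈ Ot.S,
    Ot.row s₁ = Ot.row s₂ → ∀ a : σ, Ot.row (s₁ ++ [a]) = Ot.row (s₂ ++ [a])

/-- `s ∈ S ∪ {t·σ : t ∈ S, σ ∈ Σ}`, the rows of the observation table. -/
def ObsTable.InTableRows {σ O : Type*} (Ot : ObsTable σ O) (s : List σ) : Prop :=
  s ∈ Ot.S ∨ ∃ t ∈ Ot.S, ∃ a : σ, s = t ++ [a]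

/-- The state set of the hypothesis machine: `Q̂ = {row(s) : s ∈ S}`. -/
def ObsTable.HQ {σ O : Type*} (Ot : ObsTable σ O) : Type _ :=
  {f : {e // e ∈ Ot.E} → O // ∃ s ∈ Ot.S, Ot.row s = f}

/-- The hypothesis state `row(s)` for `s ∈ S`. -/
def ObsTable.stateOf {σ O : Type*} (Ot : ObsTable σ O) (s : List σ) (hs : s ∈ Ot.S) : Ot.HQ :=
  ⟨Ot.row s, s, hs, rfl⟩

/-- `M` is the hypothesis Moore machine of the table: its initial state is `row(ε)`,
its transitions satisfy `δ̂(row(s), σ) = row(s·σ)` for `s ∈ S`, and its outputs satisfy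
`L̂(row(s)) = row(s)(ε) = T(s)` for `s ∈ S`. -/
def ObsTable.IsHypothesis {σ O : Type*} (Ot : ObsTable σ O)
    (M : MooreMachine σ O Ot.HQ) : Prop :=
  M.q0 = Ot.stateOf [] Ot.nil_mem_S ∧
  (∀ s, ∀ hs : s ∈ Ot.S, ∀ a : σ, (M.δ (Ot.stateOf s hs) a).1 = Ot.row (s ++ [a])) ∧
  (∀ s, ∀ hs : s ∈ Ot.S, M.L (Ot.stateOf s hs) = Ot.T s)

/-- The number of states of the hypothesis machine: the number of distinct rows `row(s)`, `s ∈ S`. -/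
def ObsTable.numStates {σ O : Type*} [DecidableEq O] (Ot : ObsTable σ O) : ℕ :=
  (Ot.S.image Ot.row).card

/-- A Moore machine is consistent with the table if `L(δ*(q0, s·e)) = T(s·e)` for every
`s ∈ S ∪ S·Σ` and every `e ∈ E`. -/
def MooreMachine.ConsistentWith {σ O Q : Type*} (M : MooreMachine σ O Q)
    (Ot : ObsTable σ O) : Prop :=
  ∀ s : List σ, Ot.InTableRows s → ∀ e ∈ Ot.E, M.L (M.run M.q0 (s ++ e)) = Ot.T (s ++ e)

/-- `M` computes `f : Σ* → O` if `f(w) = L(δ*(q0, w))` for all `w`. -/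
def MooreMachine.Computes {σ O Q : Type*} (M : MooreMachine σ O Q) (f : List σ → O) : Prop :=
  ∀ w : List σ, f w = M.L (M.run M.q0 w)

/-- `φ` is an isomorphism of Moore machines: a bijection on states preserving the initial
state, the transitions, and the output labeling. -/
def MooreIso {σ O Q₁ Q₂ : Type*} (M₁ : MooreMachine σ O Q₁) (M₂ : MooreMachine σ O Q₂)
    (φ : Q₁ → Q₂) : Prop :=
  Function.Bijective φ ∧ φ M₁.q0 = M₂.q0 ∧
    (∀ q a, φ (M₁.δ q a) = M₂.δ (φ q) a) ∧ ∀ q, M₂.L (φ q) = M₁.L q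

theorem MooreMachine.run_append_singleton {σ O Q : Type*} (M : MooreMachine σ O Q) (q : Q)
    (w : List σ) (a : σ) : M.run q (w ++ [a]) = M.δ (M.run q w) a :=
  List.foldl_concat ..

namespace ObsTable.IsHypothesis

variable {σ O : Type*} {Ot : ObsTable σ O} {M : MooreMachine σ O Ot.HQ}

/-- Every hypothesis state is `row(s')` for some `s' ∈ S`; consistency makes `δ̂` independent
of which representative `s'` is used. -/
theorem delta_val_eq_row (hM : Ot.IsHypothesis M) (hcons : Ot.Consistent) {q : Ot.HQ}
    {t : List σ} (ht : t ∈ Ot.S) (hq : q.1 = Ot.row t) (a : σ) :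
    (M.δ q a).1 = Ot.row (t ++ [a]) := by
  obtain ⟨s', hs', hrow⟩ := q.2
  have hq' : q = Ot.stateOf s' hs' := Subtype.ext hrow.symm
  rw [hq', hM.2.1 s' hs' a]
  exact hcons s' hs' t ht (hrow.trans hq) a

theorem run_val_eq_row (hM : Ot.IsHypothesis M) (hcons : Ot.Consistent) :
    ∀ t ∈ Ot.S, (M.run M.q0 t).1 = Ot.row t := by
  intro t
  induction t using List.reverseRecOn with
  | nil => intro _; rw [hM.1]; rfl
  | append_singleton u a ih =>
    intro hua
    have hu : u ∈ Ot.S := Ot.prefixClosed _ hua u (List.prefix_append u [a])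
    rw [M.run_append_singleton]
    exact hM.delta_val_eq_row hcons hu (ih hu) a

end ObsTable.IsHypothesis

theorem hypothesis_run_eq_row_general {σ O : Type*}
    (Ot : ObsTable σ O) (hcons : Ot.Consistent)
    (M : MooreMachine σ O Ot.HQ) (hM : Ot.IsHypothesis M) :
    ∀ s : List σ, Ot.InTableRows s → (M.run M.q0 s).1 = Ot.row s := by
  rintro s (hs | ⟨t, ht, a, rfl⟩)
  · exact hM.run_val_eq_row hcons s hs
  · rw [M.run_append_singleton]
    exact hM.delta_val_eq_row hcons ht (hM.run_val_eq_row hcons t ht) a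

/-- For a closed and consistent observation table and its hypothesis Moore
machine, the extended transition function satisfies `δ̂*(q̂0, s) = row(s)` for every
`s ∈ S ∪ {s·σ : s ∈ S, σ ∈ Σ}`. -/
theorem hypothesis_run_eq_row {σ O : Type*} [Fintype σ] [Nonempty σ] [Fintype O] [Nonempty O]
    (Ot : ObsTable σ O) (hclosed : Ot.Closed) (hcons : Ot.Consistent)
    (M : MooreMachine σ O Ot.HQ) (hM : Ot.IsHypothesis M) :
    ∀ s : List σ, Ot.InTableRows s → (M.run M.q0 s).1 = Ot.row s :=
  hypothesis_run_eq_row_general Ot hcons M hM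
end

section
/- Let (S, E, T) be a closed and consistent observation table over input alphabet Σ and output alphabet O, and let (Q̂, q̂0, δ̂, L̂) be its hypothesis Moore machine. Then the hypothesis machine agrees with the table on all of its entries: for every s ∈ S ∪ {s·σ : s ∈ S, σ ∈ Σ} and every e ∈ E, L̂(δ̂*(q̂0, s·e)) = T(s·e). -/
theorem MooreMachine.run_append {σ O Q : Type*} (M : MooreMachine σ O Q) (q : Q)
    (u v : List σ) : M.run q (u ++ v) = M.run (M.run q u) v :=
  List.foldl_append

namespace ObsTable.IsHypothesis

variable {σ O : Type*} {Ot : ObsTable σ O} {M : MooreMachine σ O Ot.HQ}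

theorem δ_stateOf_eq (hM : Ot.IsHypothesis M) {s s' : List σ} (hs : s ∈ Ot.S)
    (hs' : s' ∈ Ot.S) {a : σ} (hrow : Ot.row (s ++ [a]) = Ot.row s') :
    M.δ (Ot.stateOf s hs) a = Ot.stateOf s' hs' :=
  Subtype.ext ((hM.2.1 s hs a).trans hrow)

theorem run_q0 (hM : Ot.IsHypothesis M) {s : List σ} (hs : s ∈ Ot.S) :
    M.run M.q0 s = Ot.stateOf s hs := by
  induction s using List.reverseRecOn with
  | nil => exact hM.1
  | append_singleton t a ih =>
    have ht : t ∈ Ot.S := Ot.prefixClosed _ hs t ⟨[a], rfl⟩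
    rw [M.run_append, ih ht]
    exact Subtype.ext (hM.2.1 t ht a)

/-- By closedness, each letter of `e` moves the run from `row(t)` to some `row(t')` with
`t' ∈ S`, and suffix-closedness of `E` keeps the remaining suffix in `E`. -/
theorem L_run_stateOf (hM : Ot.IsHypothesis M) (hclosed : Ot.Closed) {e : List σ}
    (he : e ∈ Ot.E) {t : List σ} (ht : t ∈ Ot.S) :
    M.L (M.run (Ot.stateOf t ht) e) = Ot.T (t ++ e) := by
  induction e generalizing t with
  | nil => simpa [MooreMachine.run] using hM.2.2 t ht
  | cons a e ih =>
    have he' : e ∈ Ot.E := Ot.suffixClosed _ he e ⟨[a], rfl⟩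
    obtain ⟨t', ht', hrow⟩ := hclosed t ht a
    have hstep : M.run (Ot.stateOf t ht) (a :: e) = M.run (Ot.stateOf t' ht') e := by
      rw [← hM.δ_stateOf_eq ht ht' hrow]
      rfl
    rw [hstep, ih he' ht']
    simpa [ObsTable.row] using (congrFun hrow ⟨e, he'⟩).symm

end ObsTable.IsHypothesis

theorem hypothesis_agrees_with_table_general {σ O : Type*}
    (Ot : ObsTable σ O) (hclosed : Ot.Closed)
    (M : MooreMachine σ O Ot.HQ) (hM : Ot.IsHypothesis M) :
    ∀ s : List σ, Ot.InTableRows s →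
      ∀ e ∈ Ot.E, M.L (M.run M.q0 (s ++ e)) = Ot.T (s ++ e) := by
  rintro s (hs | ⟨t, ht, a, rfl⟩) e he
  · rw [M.run_append, hM.run_q0 hs, hM.L_run_stateOf hclosed he hs]
  · obtain ⟨t', ht', hrow⟩ := hclosed t ht a
    have hrun : M.run M.q0 (t ++ [a]) = Ot.stateOf t' ht' := by
      rw [M.run_append, hM.run_q0 ht]
      exact hM.δ_stateOf_eq ht ht' hrow
    rw [M.run_append, hrun, hM.L_run_stateOf hclosed he ht']
    exact (congrFun hrow ⟨e, he⟩).symm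

/-- The hypothesis Moore machine of a closed and consistent observation table
agrees with the table on all of its entries: `L̂(δ̂*(q̂0, s·e)) = T(s·e)` for every
`s ∈ S ∪ {s·σ : s ∈ S, σ ∈ Σ}` and every `e ∈ E`. -/
theorem hypothesis_agrees_with_table {σ O : Type*} [Fintype σ] [Nonempty σ]
    [Fintype O] [Nonempty O]
    (Ot : ObsTable σ O) (hclosed : Ot.Closed) (hcons : Ot.Consistent)
    (M : MooreMachine σ O Ot.HQ) (hM : Ot.IsHypothesis M) :
    ∀ s : List σ, Ot.InTableRows s →
      ∀ e ∈ Ot.E, M.L (M.run M.q0 (s ++ e)) = Ot.T (s ++ e) :=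
  hypothesis_agrees_with_table_general Ot hclosed M hM
end

section
/- Let (S, E, T) be a closed and consistent observation table over input alphabet Σ and output alphabet O, and let n be the number of distinct rows row(s) for s ∈ S (the number of states of the hypothesis Moore machine). Then every Moore machine (Q, q0, δ, L) over (Σ, O) that is consistent with the table has at least n states: |Q| ≥ n. -/
/-! A machine consistent with the table reproduces every row: `row(s)` is read off the state
`δ*(q0, s)` as `e ↦ L(δ*(δ*(q0, s), e))`. Hence distinct rows of `S` are reached in distinct
states of the machine, so it has at least as many states as there are distinct rows. -/

namespace MooreMachine

variable {σ O Q : Type*} (M : MooreMachine σ O Q)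

theorem run_append_s3 (q : Q) (u v : List σ) : M.run q (u ++ v) = M.run (M.run q u) v :=
  List.foldl_append

def stateRow (E : Finset (List σ)) (q : Q) : {e // e ∈ E} → O :=
  fun e => M.L (M.run q e.1)

theorem row_eq_stateRow_run {Ot : ObsTable σ O} (hM : M.ConsistentWith Ot) {s : List σ}
    (hs : Ot.InTableRows s) : Ot.row s = M.stateRow Ot.E (M.run M.q0 s) := by
  funext e
  rw [stateRow, ← run_append_s3, hM s hs e.1 e.2]
  rfl

end MooreMachine

theorem consistent_machine_card_ge_numStates_general {σ O : Type*} [DecidableEq O]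
    (Ot : ObsTable σ O)
    {Q : Type*} [Fintype Q] (M : MooreMachine σ O Q) (hM : M.ConsistentWith Ot) :
    Ot.numStates ≤ Fintype.card Q := by
  have hrows : Ot.S.image Ot.row ⊆ Finset.univ.image (M.stateRow Ot.E) := by
    intro r hr
    obtain ⟨s, hs, rfl⟩ := Finset.mem_image.mp hr
    rw [M.row_eq_stateRow_run hM (Or.inl hs)]
    exact Finset.mem_image_of_mem _ (Finset.mem_univ _)
  calc Ot.numStates ≤ (Finset.univ.image (M.stateRow Ot.E)).card := Finset.card_le_card hrows
    _ ≤ Fintype.card Q := Finset.card_image_le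

/-- Any Moore machine consistent with a closed and consistent observation
table has at least `n` states, where `n` is the number of distinct rows `row(s)`, `s ∈ S`
(the number of states of the hypothesis machine). -/
theorem consistent_machine_card_ge_numStates {σ O : Type*} [Fintype σ] [Nonempty σ]
    [Fintype O] [Nonempty O] [DecidableEq O]
    (Ot : ObsTable σ O) (hclosed : Ot.Closed) (hcons : Ot.Consistent)
    {Q : Type*} [Fintype Q] (M : MooreMachine σ O Q) (hM : M.ConsistentWith Ot) :
    Ot.numStates ≤ Fintype.card Q :=
  consistent_machine_card_ge_numStates_general Ot M hM
end
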